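/- arXiv:1706.03049 — 6 statements merged into one kernel-verified Lean document; each statement's English description precedes it below -/
import Mathlib

section
/- If a triangle abc inscribed in a convex polygon P is anchored to the unit vector u, then -u is an outer normal to P at a, i.e., a minimizes x·u over x ∈ P. -/
noncomputable section
open Set Real

/-- Points in the plane. -/
abbrev Pt : Type := ℝ × ℝ

/-- 2D wedge (cross) product. -/
def wedge (p q : Pt) : ℝ := p.1 * q.2 - p.2 * q.1

/-- Euclidean dot product on the plane. -/
def dotp (p q : Pt) : ℝ := p.1 * q.1 + p.2 * q.2

/-- Area of the triangle with vertices `a b c`. -/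
def triArea (a b c : Pt) : ℝ := |wedge (b - a) (c - a)| / 2

/-- `abc` is inscribed in `P`, counter-clockwise, with `u` an outer normal to the side `bc`. -/
def InscribedNormal (P : Set Pt) (u a b c : Pt) : Prop :=
  a ∈ P ∧ b ∈ P ∧ c ∈ P ∧ 0 ≤ wedge (b - a) (c - a) ∧
    dotp (c - b) u = 0 ∧ dotp a u ≤ dotp b u

/-- `abc` is anchored to `u` in `P`: it maximizes area among inscribed triangles
with `u` as outer normal to the side `bc`. -/
def Anchored (P : Set Pt) (u a b c : Pt) : Prop :=
  InscribedNormal P u a b c ∧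
    ∀ a' b' c' : Pt, InscribedNormal P u a' b' c' → triArea a' b' c' ≤ triArea a b c

lemma key_identity (u a b c : Pt) (hu : u.1 ^ 2 + u.2 ^ 2 = 1)
    (hbc : dotp (c - b) u = 0) :
    wedge (b - a) (c - a) =
      (u.1 * (c - b).2 - u.2 * (c - b).1) * (dotp b u - dotp a u) := by
  simp only [dotp, wedge, Prod.fst_sub, Prod.snd_sub] at *
  linear_combination ((b.1 - a.1) * u.2 - (b.2 - a.2) * u.1) * hbc +
    ((b.2 - a.2) * (c.1 - b.1) - (b.1 - a.1) * (c.2 - b.2)) * hu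

/-- If a triangle `abc` inscribed in a convex polygon `P` is anchored to
the unit vector `u`, then `-u` is an outer normal to `P` at `a`, i.e. `a` minimizes
`x ⬝ u` over `x ∈ P`. -/
theorem stmt_2 (S : Finset Pt) (hS : ¬ Collinear ℝ (S : Set Pt))
    (P : Set Pt) (hP : P = convexHull ℝ (S : Set Pt))
    (u : Pt) (hu : u.1 ^ 2 + u.2 ^ 2 = 1)
    (a b c : Pt) (h : Anchored P u a b c) :
    ∀ x ∈ P, dotp a u ≤ dotp x u := by
  -- Step 1: P has nonempty interior.
  have hspan : affineSpan ℝ ((S : Set Pt)) = ⊤ := by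
    have hne : (S : Set Pt).Nonempty := by
      by_contra hne
      rw [Set.not_nonempty_iff_eq_empty] at hne
      exact hS (hne ▸ collinear_empty ℝ _)
    rw [AffineSubspace.affineSpan_eq_top_iff_vectorSpan_eq_top_of_nonempty ℝ Pt Pt hne]
    have h2 : ¬ Module.finrank ℝ (vectorSpan ℝ (S : Set Pt)) ≤ 1 := by
      rwa [← collinear_iff_finrank_le_one]
    have hfr : Module.finrank ℝ Pt = 2 := by
      simp [Module.finrank_prod]
    have h2' : 2 ≤ Module.finrank ℝ (vectorSpan ℝ (S : Set Pt)) := Nat.lt_of_not_le h2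
    apply Submodule.eq_top_of_finrank_eq
    rw [hfr]
    exact le_antisymm (le_trans (Submodule.finrank_le _) (le_of_eq hfr)) h2'
  have hconv : Convex ℝ P := hP ▸ convex_convexHull ℝ _
  have hint : (interior P).Nonempty := by
    rw [hconv.interior_nonempty_iff_affineSpan_eq_top, hP, affineSpan_convexHull]
    exact hspan
  obtain ⟨z, hz⟩ := hint
  obtain ⟨r, hr, hball⟩ := Metric.isOpen_iff.mp isOpen_interior z hz
  have hballP : Metric.ball z r ⊆ P := hball.trans interior_subset
  have hu1 : |u.1| ≤ 1 := by
    rw [abs_le]; constructor <;> nlinarith [sq_nonneg u.2]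
  have hu2 : |u.2| ≤ 1 := by
    rw [abs_le]; constructor <;> nlinarith [sq_nonneg u.1]
  have hmem : ∀ w : Pt, |w.1| ≤ 1 → |w.2| ≤ 1 → ∀ t : ℝ, |t| < r → z + t • w ∈ P := by
    intro w hw1 hw2 t ht
    apply hballP
    rw [Metric.mem_ball, dist_eq_norm]
    have he : z + t • w - z = t • w := by abel
    rw [he, Prod.norm_def]
    have h1 : ‖(t • w).1‖ < r := by
      simp only [Prod.smul_fst, smul_eq_mul, Real.norm_eq_abs, abs_mul]
      calc |t| * |w.1| ≤ |t| * 1 := by gcongr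
        _ < r := by simpa using ht
    have h2 : ‖(t • w).2‖ < r := by
      simp only [Prod.smul_snd, smul_eq_mul, Real.norm_eq_abs, abs_mul]
      calc |t| * |w.2| ≤ |t| * 1 := by gcongr
        _ < r := by simpa using ht
    exact max_lt h1 h2
  -- Step 2: a positive-area inscribed triangle.
  set a' : Pt := z + (-(r/2)) • u with ha'
  set b' : Pt := z + (0:ℝ) • u with hb'
  set c' : Pt := z + (r/2) • (-u.2, u.1) with hc'
  have hma : a' ∈ P := hmem u hu1 hu2 _ (by rw [abs_neg, abs_of_pos (by positivity)]; linarith)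
  have hmb : b' ∈ P := hmem u hu1 hu2 _ (by simpa using hr)
  have hmc : c' ∈ P := hmem (-u.2, u.1) (by simpa using hu2) (by simpa using hu1) _
    (by rw [abs_of_pos (by positivity)]; linarith)
  have hwedge' : wedge (b' - a') (c' - a') = (r/2)^2 := by
    simp only [ha', hb', hc', wedge, Prod.fst_sub, Prod.snd_sub, Prod.fst_add, Prod.snd_add,
      Prod.smul_fst, Prod.smul_snd, smul_eq_mul]
    nlinarith [hu]
  have hins' : InscribedNormal P u a' b' c' := by
    refine ⟨hma, hmb, hmc, by rw [hwedge']; positivity, ?_, ?_⟩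
    · simp only [ha', hb', hc', dotp, Prod.fst_sub, Prod.snd_sub, Prod.fst_add, Prod.snd_add,
        Prod.smul_fst, Prod.smul_snd, smul_eq_mul]
      ring
    · simp only [ha', hb', hc', dotp, Prod.fst_add, Prod.snd_add,
        Prod.smul_fst, Prod.smul_snd, smul_eq_mul]
      nlinarith [hu]
  have harea : (r/2)^2 / 2 ≤ triArea a b c := by
    have := h.2 a' b' c' hins'
    rwa [triArea, hwedge', abs_of_pos (by positivity)] at this
  -- Step 3: positivity of the factors.
  obtain ⟨haP, hbP, hcP, hw0, hbc, hab⟩ := h.1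
  have hw0' : wedge (b - a) (c - a) > 0 := by
    have : triArea a b c = wedge (b - a) (c - a) / 2 := by
      rw [triArea, abs_of_nonneg hw0]
    nlinarith [harea, hr]
  set t0 : ℝ := u.1 * (c - b).2 - u.2 * (c - b).1 with ht0
  have hk := key_identity u a b c hu hbc
  have hd : dotp b u - dotp a u > 0 := by
    rcases lt_or_eq_of_le hab with h1 | h1
    · linarith
    · exfalso; rw [hk, ← h1] at hw0'; simp at hw0'
  have ht0pos : t0 > 0 := by
    by_contra hneg
    push_neg at hneg
    nlinarith [hw0', hk]
  -- Step 4: conclude.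
  intro x hx
  by_contra hxa
  push_neg at hxa
  have hk2 := key_identity u x b c hu hbc
  have hw1 : wedge (b - x) (c - x) > wedge (b - a) (c - a) := by
    rw [hk, hk2]
    have : dotp b u - dotp x u > dotp b u - dotp a u := by linarith
    nlinarith [ht0pos, this]
  have hins2 : InscribedNormal P u x b c :=
    ⟨hx, hbP, hcP, by linarith, hbc, by linarith⟩
  have := h.2 x b c hins2
  rw [triArea, triArea, abs_of_nonneg hw0, abs_of_pos (by linarith : 0 < wedge (b-x) (c-x))] at this
  linarith
end
end

section
/- If triangles abc and a'b'c' are both anchored to the same unit vector u in a convex polygon P, then b = b' and c = c'. -/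
noncomputable section
open Set Real

/-!
Measure points by their height `dotp · u` and abscissa `wedge u ·`. An inscribed triangle with
base normal `u` has area `(height of base - height of apex) * (length of base) / 2`. Since `P`
has interior points the maximal area is positive, so an anchored triangle has its apex at the
lowest level of `P` and its base is the whole chord of `P` at the base level. Two anchored
triangles therefore share the apex level; the triangle on the same apex whose base joins the
midpoints of the two bases is inscribed by convexity, and AM-GM applied to its area forces the
two base levels, hence the two bases, to coincide.
-/

open Filter Topology

section Coordinates

variable {u : Pt}

theorem dotp_sub_left (p q r : Pt) : dotp (p - q) r = dotp p r - dotp q r := by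
  simp only [dotp, Prod.fst_sub, Prod.snd_sub]; ring

theorem dotp_midpoint_left (p q r : Pt) :
    dotp (midpoint ℝ p q) r = (dotp p r + dotp q r) / 2 := by
  simp only [midpoint_eq_smul_add, dotp, Prod.smul_fst, Prod.smul_snd, Prod.fst_add,
    Prod.snd_add, smul_eq_mul, invOf_eq_inv]
  ring

theorem wedge_midpoint_right (p q r : Pt) :
    wedge r (midpoint ℝ p q) = (wedge r p + wedge r q) / 2 := by
  simp only [midpoint_eq_smul_add, wedge, Prod.smul_fst, Prod.smul_snd, Prod.fst_add,
    Prod.snd_add, smul_eq_mul, invOf_eq_inv]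
  ring

theorem eq_of_dotp_eq_of_wedge_eq (hu : u.1 ^ 2 + u.2 ^ 2 = 1) {p q : Pt}
    (h₁ : dotp p u = dotp q u) (h₂ : wedge u p = wedge u q) : p = q := by
  simp only [dotp, wedge] at h₁ h₂
  ext
  · linear_combination u.1 * h₁ - u.2 * h₂ - (p.1 - q.1) * hu
  · linear_combination u.2 * h₁ + u.1 * h₂ - (p.2 - q.2) * hu

theorem wedge_sub_sub_of_dotp_eq (hu : u.1 ^ 2 + u.2 ^ 2 = 1) {a b c : Pt}
    (hbc : dotp c u = dotp b u) :
    wedge (b - a) (c - a) = (dotp b u - dotp a u) * (wedge u c - wedge u b) := by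
  simp only [dotp, wedge, Prod.fst_sub, Prod.snd_sub] at hbc ⊢
  linear_combination (-((b.1 - a.1) * (c.2 - a.2) - (b.2 - a.2) * (c.1 - a.1))) * hu +
    (a.2 * u.1 - a.1 * u.2 - (b.2 * u.1 - b.1 * u.2)) * hbc

end Coordinates

section InscribedNormal

variable {P : Set Pt} {u a b c : Pt}

theorem inscribedNormal_of_coords (hu : u.1 ^ 2 + u.2 ^ 2 = 1)
    (ha : a ∈ P) (hb : b ∈ P) (hc : c ∈ P) (hbc : dotp c u = dotp b u)
    (hab : dotp a u ≤ dotp b u) (hbc' : wedge u b ≤ wedge u c) :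
    InscribedNormal P u a b c := by
  refine ⟨ha, hb, hc, ?_, by rw [dotp_sub_left, hbc, sub_self], hab⟩
  rw [wedge_sub_sub_of_dotp_eq hu hbc]
  exact mul_nonneg (sub_nonneg.2 hab) (sub_nonneg.2 hbc')

theorem InscribedNormal.dotp_eq (h : InscribedNormal P u a b c) : dotp c u = dotp b u :=
  sub_eq_zero.1 (dotp_sub_left c b u ▸ h.2.2.2.2.1)

theorem InscribedNormal.triArea_eq (hu : u.1 ^ 2 + u.2 ^ 2 = 1)
    (h : InscribedNormal P u a b c) :
    triArea a b c = (dotp b u - dotp a u) * (wedge u c - wedge u b) / 2 := by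
  rw [triArea, ← wedge_sub_sub_of_dotp_eq hu h.dotp_eq, abs_of_nonneg h.2.2.2.1]

end InscribedNormal

theorem interior_convexHull_nonempty_of_not_collinear {s : Set Pt}
    (hs : ¬ Collinear ℝ s) : (interior (convexHull ℝ s)).Nonempty := by
  rw [interior_convexHull_nonempty_iff_affineSpan_eq_top,
    AffineSubspace.affineSpan_eq_top_iff_vectorSpan_eq_top_of_nontrivial]
  refine Submodule.eq_top_of_finrank_eq (le_antisymm (Submodule.finrank_le _) ?_)
  rw [collinear_iff_finrank_le_one, not_le] at hs
  simp only [Module.finrank_prod, Module.finrank_self]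
  exact hs

theorem exists_inscribedNormal_triArea_pos {P : Set Pt} (hP : (interior P).Nonempty)
    {u : Pt} (hu : u.1 ^ 2 + u.2 ^ 2 = 1) :
    ∃ a b c, InscribedNormal P u a b c ∧ 0 < triArea a b c := by
  obtain ⟨p, hp⟩ := hP
  have near : ∀ w : Pt, ∀ᶠ r in 𝓝[>] (0 : ℝ), p + r • w ∈ P := fun w =>
    nhdsWithin_le_nhds <| ((continuous_const.add (continuous_id.smul continuous_const)).tendsto'
      0 p (by simp)).eventually (mem_interior_iff_mem_nhds.1 hp)
  set v : Pt := (-u.2, u.1)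
  obtain ⟨r, ha, hb, hc, hr⟩ :=
    ((near (-u)).and ((near (-v)).and ((near v).and self_mem_nhdsWithin))).exists
  have hbc : dotp (p + r • v) u = dotp (p + r • -v) u := by
    simp only [dotp, v, Prod.fst_add, Prod.snd_add, Prod.smul_fst, Prod.smul_snd, Prod.fst_neg,
      Prod.snd_neg, smul_eq_mul]
    ring
  have height : dotp (p + r • -v) u - dotp (p + r • -u) u = r := by
    simp only [dotp, v, Prod.fst_add, Prod.snd_add, Prod.smul_fst, Prod.smul_snd, Prod.fst_neg,
      Prod.snd_neg, smul_eq_mul]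
    linear_combination r * hu
  have width : wedge u (p + r • v) - wedge u (p + r • -v) = 2 * r := by
    simp only [wedge, v, Prod.fst_add, Prod.snd_add, Prod.smul_fst, Prod.smul_snd, Prod.fst_neg,
      Prod.snd_neg, smul_eq_mul]
    linear_combination 2 * r * hu
  have hins := inscribedNormal_of_coords hu ha hb hc hbc (by linarith) (by linarith)
  refine ⟨_, _, _, hins, ?_⟩
  rw [hins.triArea_eq hu, height, width]
  positivity

theorem eq_of_mul_eq_of_add_mul_add_le {h h' w w' : ℝ} (hh' : 0 < h') (hw : 0 < w)
    (heq : h * w = h' * w') (hle : (h + h') * (w + w') ≤ 4 * (h * w)) : h = h' := by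
  have hsq : w * (h - h') ^ 2 ≤ 0 := by
    linear_combination h' * hle + (h + h') * heq
  have hsq' : (h - h') ^ 2 = 0 := le_antisymm (nonpos_of_mul_nonpos_right hsq hw) (sq_nonneg _)
  exact sub_eq_zero.1 (pow_eq_zero_iff two_ne_zero |>.1 hsq')

namespace Anchored

variable {P : Set Pt} {u a b c : Pt}

theorem mul_le_of_inscribedNormal (hu : u.1 ^ 2 + u.2 ^ 2 = 1) (h : Anchored P u a b c)
    {a' b' c' : Pt} (h' : InscribedNormal P u a' b' c') :
    (dotp b' u - dotp a' u) * (wedge u c' - wedge u b') ≤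
      (dotp b u - dotp a u) * (wedge u c - wedge u b) := by
  have hmax := h.2 a' b' c' h'
  rw [h'.triArea_eq hu, h.1.triArea_eq hu] at hmax
  linarith

theorem dotp_lt_and_wedge_lt (hu : u.1 ^ 2 + u.2 ^ 2 = 1) (h : Anchored P u a b c)
    (hA : 0 < triArea a b c) : dotp a u < dotp b u ∧ wedge u b < wedge u c := by
  rw [h.1.triArea_eq hu] at hA
  have hprod : 0 < (dotp b u - dotp a u) * (wedge u c - wedge u b) := by linarith
  have hheight : 0 < dotp b u - dotp a u :=
    (sub_nonneg.2 h.1.2.2.2.2.2).lt_of_ne fun h0 => by simp [← h0] at hprod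
  exact ⟨sub_pos.1 hheight, sub_pos.1 (pos_of_mul_pos_right hprod hheight.le)⟩

theorem dotp_le_of_mem (hu : u.1 ^ 2 + u.2 ^ 2 = 1) (h : Anchored P u a b c)
    (hA : 0 < triArea a b c) {p : Pt} (hp : p ∈ P) : dotp a u ≤ dotp p u := by
  obtain ⟨hab, hbc⟩ := h.dotp_lt_and_wedge_lt hu hA
  rcases le_total (dotp p u) (dotp b u) with hpb | hbp
  · have := h.mul_le_of_inscribedNormal hu
      (inscribedNormal_of_coords hu hp h.1.2.1 h.1.2.2.1 h.1.dotp_eq hpb hbc.le)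
    nlinarith
  · linarith

theorem wedge_le_of_mem (hu : u.1 ^ 2 + u.2 ^ 2 = 1) (h : Anchored P u a b c)
    (hA : 0 < triArea a b c) {p : Pt} (hp : p ∈ P) (hpb : dotp p u = dotp b u) :
    wedge u b ≤ wedge u p := by
  obtain ⟨hab, hbc⟩ := h.dotp_lt_and_wedge_lt hu hA
  rcases le_total (wedge u b) (wedge u p) with hbp | hpb'
  · exact hbp
  · have := h.mul_le_of_inscribedNormal hu (inscribedNormal_of_coords hu h.1.1 hp h.1.2.2.1
      (h.1.dotp_eq.trans hpb.symm) (hpb ▸ hab.le) (hpb'.trans hbc.le))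
    rw [hpb] at this
    nlinarith

theorem le_wedge_of_mem (hu : u.1 ^ 2 + u.2 ^ 2 = 1) (h : Anchored P u a b c)
    (hA : 0 < triArea a b c) {p : Pt} (hp : p ∈ P) (hpb : dotp p u = dotp b u) :
    wedge u p ≤ wedge u c := by
  obtain ⟨hab, hbc⟩ := h.dotp_lt_and_wedge_lt hu hA
  rcases le_total (wedge u b) (wedge u p) with hbp | hpb'
  · have := h.mul_le_of_inscribedNormal hu
      (inscribedNormal_of_coords hu h.1.1 h.1.2.1 hp hpb hab.le hbp)
    nlinarith
  · linarith

theorem dotp_base_eq (hP : Convex ℝ P) (hu : u.1 ^ 2 + u.2 ^ 2 = 1) {a' b' c' : Pt}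
    (h : Anchored P u a b c) (h' : Anchored P u a' b' c')
    (hA : 0 < triArea a b c) (hA' : 0 < triArea a' b' c') : dotp b u = dotp b' u := by
  obtain ⟨hab, hbc⟩ := h.dotp_lt_and_wedge_lt hu hA
  obtain ⟨hab', hbc'⟩ := h'.dotp_lt_and_wedge_lt hu hA'
  have hapex : dotp a u = dotp a' u :=
    le_antisymm (h.dotp_le_of_mem hu hA h'.1.1) (h'.dotp_le_of_mem hu hA' h.1.1)
  have harea := le_antisymm (h'.mul_le_of_inscribedNormal hu h.1)
    (h.mul_le_of_inscribedNormal hu h'.1)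
  have hmid := h.mul_le_of_inscribedNormal hu (inscribedNormal_of_coords hu h.1.1
    (hP.midpoint_mem h.1.2.1 h'.1.2.1) (hP.midpoint_mem h.1.2.2.1 h'.1.2.2.1)
    (by rw [dotp_midpoint_left, dotp_midpoint_left, h.1.dotp_eq, h'.1.dotp_eq])
    (by rw [dotp_midpoint_left]; linarith)
    (by rw [wedge_midpoint_right, wedge_midpoint_right]; linarith))
  rw [dotp_midpoint_left, wedge_midpoint_right, wedge_midpoint_right] at hmid
  rw [← hapex] at harea
  have hheight := eq_of_mul_eq_of_add_mul_add_le (sub_pos.2 (hapex ▸ hab')) (sub_pos.2 hbc)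
    harea (by linarith)
  linarith

end Anchored

/-- If triangles `abc` and `a'b'c'` are both anchored to the same unit
vector `u` in a convex polygon `P`, then `b = b'` and `c = c'`. -/
theorem stmt_3 (S : Finset Pt) (hS : ¬ Collinear ℝ (S : Set Pt))
    (P : Set Pt) (hP : P = convexHull ℝ (S : Set Pt))
    (u : Pt) (hu : u.1 ^ 2 + u.2 ^ 2 = 1)
    (a b c a' b' c' : Pt) (h : Anchored P u a b c) (h' : Anchored P u a' b' c') :
    b = b' ∧ c = c' := by
  subst hP
  obtain ⟨a₀, b₀, c₀, h₀, hA₀⟩ :=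
    exists_inscribedNormal_triArea_pos (interior_convexHull_nonempty_of_not_collinear hS) hu
  have hA := hA₀.trans_le (h.2 a₀ b₀ c₀ h₀)
  have hA' := hA₀.trans_le (h'.2 a₀ b₀ c₀ h₀)
  have hb := h.dotp_base_eq (convex_convexHull ℝ _) hu h' hA hA'
  have hc : dotp c u = dotp c' u := by rw [h.1.dotp_eq, h'.1.dotp_eq, hb]
  constructor
  · exact eq_of_dotp_eq_of_wedge_eq hu hb <| le_antisymm
      (h.wedge_le_of_mem hu hA h'.1.2.1 hb.symm) (h'.wedge_le_of_mem hu hA' h.1.2.1 hb)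
  · exact eq_of_dotp_eq_of_wedge_eq hu hc <| le_antisymm
      (h'.le_wedge_of_mem hu hA' h.1.2.2.1 (hc.trans h'.1.dotp_eq))
      (h.le_wedge_of_mem hu hA h'.1.2.2.1 (hc.symm.trans h.1.dotp_eq))
end
end

section
/- With P, u, v, y_min, y_max, f, g as defined, the function s(y) = sqrt((1/2)(y - y_min)(f(y)+g(y))) on [y_min, y_max] — whose square is the area of the triangle with apex at height y_min and base the slice of P at height y — has the property that every local maximum of s² on [y_min, y_max] is a global maximum. -/
/-!
The slice of `P` at height `y` is the segment `[-g y, f y]`. Since `P` is convex, its upper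
envelope `f` is concave and its lower envelope `-g` convex, so the width `f + g` is concave on
`[y_min, y_max]`; the height `y - y_min` is affine. The geometric mean `√(a b)` of two nonnegative
concave functions is concave (weighted Cauchy–Schwarz), so `s = √(s²)` is concave. A local
maximum of `s²` is one of `s`, hence a global maximum of `s` and therefore of `s²`.
-/

noncomputable section
open Set Real

open scoped Pointwise

section SliceEnvelope

variable {E : Type*} [AddCommGroup E] [Module ℝ E] {K : Set (E × ℝ)} {s : Set E}

theorem Convex.smul_slice_add_smul_slice_subset (hK : Convex ℝ K) {a b : E} {p q : ℝ}
    (hp : 0 ≤ p) (hq : 0 ≤ q) (hpq : p + q = 1) :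
    p • {z | (a, z) ∈ K} + q • {z | (b, z) ∈ K} ⊆ {z | (p • a + q • b, z) ∈ K} := by
  rintro _ ⟨_, ⟨za, hza, rfl⟩, _, ⟨zb, hzb, rfl⟩, rfl⟩
  simpa using hK hza hzb hp hq hpq

theorem concaveOn_sSup_slice (hK : Convex ℝ K) (hs : Convex ℝ s)
    (hne : ∀ x ∈ s, {z | (x, z) ∈ K}.Nonempty) (hbdd : ∀ x ∈ s, BddAbove {z | (x, z) ∈ K}) :
    ConcaveOn ℝ s fun x => sSup {z | (x, z) ∈ K} := by
  refine ⟨hs, fun a ha b hb p q hp hq hpq => ?_⟩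
  calc p • sSup {z | (a, z) ∈ K} + q • sSup {z | (b, z) ∈ K}
      = sSup (p • {z | (a, z) ∈ K} + q • {z | (b, z) ∈ K}) := by
        rw [csSup_add (hne a ha).smul_set ((hbdd a ha).smul_of_nonneg hp) (hne b hb).smul_set
          ((hbdd b hb).smul_of_nonneg hq), Real.sSup_smul_of_nonneg hp,
          Real.sSup_smul_of_nonneg hq]
    _ ≤ sSup {z | (p • a + q • b, z) ∈ K} :=
        csSup_le_csSup (hbdd _ (hs ha hb hp hq hpq))
          ((hne a ha).smul_set.add (hne b hb).smul_set)
          (hK.smul_slice_add_smul_slice_subset hp hq hpq)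

theorem convexOn_sInf_slice (hK : Convex ℝ K) (hs : Convex ℝ s)
    (hne : ∀ x ∈ s, {z | (x, z) ∈ K}.Nonempty) (hbdd : ∀ x ∈ s, BddBelow {z | (x, z) ∈ K}) :
    ConvexOn ℝ s fun x => sInf {z | (x, z) ∈ K} := by
  refine ⟨hs, fun a ha b hb p q hp hq hpq => ?_⟩
  calc sInf {z | (p • a + q • b, z) ∈ K}
      ≤ sInf (p • {z | (a, z) ∈ K} + q • {z | (b, z) ∈ K}) :=
        csInf_le_csInf (hbdd _ (hs ha hb hp hq hpq))
          ((hne a ha).smul_set.add (hne b hb).smul_set)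
          (hK.smul_slice_add_smul_slice_subset hp hq hpq)
    _ = p • sInf {z | (a, z) ∈ K} + q • sInf {z | (b, z) ∈ K} := by
        rw [csInf_add (hne a ha).smul_set ((hbdd a ha).smul_of_nonneg hp) (hne b hb).smul_set
          ((hbdd b hb).smul_of_nonneg hq), Real.sInf_smul_of_nonneg hp,
          Real.sInf_smul_of_nonneg hq]

end SliceEnvelope

theorem ConcaveOn.sqrt_mul {E : Type*} [AddCommGroup E] [Module ℝ E] {s : Set E} {f g : E → ℝ}
    (hf : ConcaveOn ℝ s f) (hg : ConcaveOn ℝ s g)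
    (hf₀ : ∀ x ∈ s, 0 ≤ f x) (hg₀ : ∀ x ∈ s, 0 ≤ g x) :
    ConcaveOn ℝ s fun x => √(f x * g x) := by
  refine ⟨hf.1, fun a ha b hb p q hp hq hpq => ?_⟩
  have hc := hf.1 ha hb hp hq hpq
  calc p • √(f a * g a) + q • √(f b * g b)
      ≤ √((p • f a + q • f b) * (p • g a + q • g b)) := by
        rw [Real.sqrt_mul (hf₀ a ha), Real.sqrt_mul (hf₀ b hb)]
        apply Real.le_sqrt_of_sq_le
        have cauchy_schwarz (α β γ δ : ℝ) : (p * (α * β) + q * (γ * δ)) ^ 2 ≤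
            (p * α ^ 2 + q * γ ^ 2) * (p * β ^ 2 + q * δ ^ 2) := by
          linear_combination mul_nonneg (mul_nonneg hp hq) (sq_nonneg (α * δ - γ * β))
        simpa only [smul_eq_mul, Real.sq_sqrt (hf₀ a ha), Real.sq_sqrt (hf₀ b hb),
          Real.sq_sqrt (hg₀ a ha), Real.sq_sqrt (hg₀ b hb)]
          using cauchy_schwarz (√(f a)) (√(g a)) (√(f b)) (√(g b))
    _ ≤ √(f (p • a + q • b) * g (p • a + q • b)) :=
        Real.sqrt_le_sqrt (mul_le_mul (hf.2 ha hb hp hq hpq) (hg.2 ha hb hp hq hpq)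
          (by have := hg₀ a ha; have := hg₀ b hb; simp only [smul_eq_mul]; positivity) (hf₀ _ hc))

theorem IsLocalMaxOn.isMaxOn_of_concaveOn_sqrt {E : Type*} [AddCommGroup E] [TopologicalSpace E]
    [Module ℝ E] [IsTopologicalAddGroup E] [ContinuousSMul ℝ E] {s : Set E} {F : E → ℝ} {a : E}
    (ha : a ∈ s) (hloc : IsLocalMaxOn F s a) (ha₀ : 0 ≤ F a)
    (hconc : ConcaveOn ℝ s fun x => √(F x)) : IsMaxOn F s a := fun _ hx =>
  (Real.sqrt_le_sqrt_iff ha₀).1 <|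
    IsMaxOn.of_isLocalMaxOn_of_concaveOn ha (hloc.comp_mono fun _ _ => Real.sqrt_le_sqrt) hconc hx

section Frame

variable {u v : Pt}

theorem continuous_dotp_left (w : Pt) : Continuous fun x => dotp x w := by
  unfold dotp; fun_prop

theorem dotp_smul_add_smul_right (hu : u.1 ^ 2 + u.2 ^ 2 = 1) (hv : v = (-u.2, u.1)) (y z : ℝ) :
    dotp (y • u + z • v) v = z := by
  subst hv
  simp only [dotp, Prod.fst_add, Prod.snd_add, Prod.smul_fst, Prod.smul_snd, smul_eq_mul]
  linear_combination z * hu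

theorem dotp_smul_add_dotp_smul (hu : u.1 ^ 2 + u.2 ^ 2 = 1) (hv : v = (-u.2, u.1)) (x : Pt) :
    dotp x u • u + dotp x v • v = x := by
  subst hv
  ext
  · simp only [dotp, Prod.fst_add, Prod.smul_fst, smul_eq_mul]
    linear_combination x.1 * hu
  · simp only [dotp, Prod.snd_add, Prod.smul_snd, smul_eq_mul]
    linear_combination x.2 * hu

theorem slice_subset_image_dotp (hu : u.1 ^ 2 + u.2 ^ 2 = 1) (hv : v = (-u.2, u.1)) (P : Set Pt)
    (y : ℝ) : {z : ℝ | y • u + z • v ∈ P} ⊆ (fun x => dotp x v) '' P :=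
  fun z hz => ⟨y • u + z • v, hz, dotp_smul_add_smul_right hu hv y z⟩

theorem slice_nonempty_of_mem_Icc (hu : u.1 ^ 2 + u.2 ^ 2 = 1) (hv : v = (-u.2, u.1)) {P : Set Pt}
    (hPc : Convex ℝ P) (hPk : IsCompact P) (hPne : P.Nonempty) {y : ℝ}
    (hy : y ∈ Icc (sInf ((fun x => dotp x u) '' P)) (sSup ((fun x => dotp x u) '' P))) :
    {z : ℝ | y • u + z • v ∈ P}.Nonempty := by
  rw [← eq_Icc_of_connected_compact ((hPc.isConnected hPne).image _
    (continuous_dotp_left u).continuousOn) (hPk.image (continuous_dotp_left u))] at hy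
  obtain ⟨x, hxP, rfl⟩ := hy
  exact ⟨dotp x v, by simpa only [mem_ofPred_eq, dotp_smul_add_dotp_smul hu hv] using hxP⟩

end Frame

theorem stmt_5_general (S : Finset Pt) (hSne : (S : Set Pt).Nonempty)
    (P : Set Pt) (hP : P = convexHull ℝ (S : Set Pt))
    (u : Pt) (hu : u.1 ^ 2 + u.2 ^ 2 = 1)
    (v : Pt) (hv : v = (-u.2, u.1))
    (ymin ymax : ℝ)
    (hymin : ymin = sInf ((fun x => dotp x u) '' P))
    (hymax : ymax = sSup ((fun x => dotp x u) '' P))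
    (f g : ℝ → ℝ)
    (hf : ∀ y ∈ Icc ymin ymax, f y = sSup {z : ℝ | y • u + z • v ∈ P})
    (hg : ∀ y ∈ Icc ymin ymax, g y = -sInf {z : ℝ | y • u + z • v ∈ P})
    (s2 : ℝ → ℝ) (hs2 : ∀ y, s2 y = (y - ymin) * (f y + g y) / 2) :
    ∀ y ∈ Icc ymin ymax, IsLocalMaxOn s2 (Icc ymin ymax) y →
      ∀ y' ∈ Icc ymin ymax, s2 y' ≤ s2 y := by
  intro y hy hloc
  have hPc : Convex ℝ P := hP ▸ convex_convexHull ℝ _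
  have hPk : IsCompact P := hP ▸ S.finite_toSet.isCompact_convexHull (𝕜 := ℝ)
  have hPne : P.Nonempty := hP ▸ hSne.convexHull
  set K : Set (ℝ × ℝ) := {p | p.1 • u + p.2 • v ∈ P}
  have hK : Convex ℝ K :=
    hPc.linear_preimage ((LinearMap.fst ℝ ℝ ℝ).smulRight u + (LinearMap.snd ℝ ℝ ℝ).smulRight v)
  have hne : ∀ y ∈ Icc ymin ymax, {z | (y, z) ∈ K}.Nonempty := fun y hy =>
    slice_nonempty_of_mem_Icc hu hv hPc hPk hPne (hymin ▸ hymax ▸ hy)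
  have hbdd : ∀ y, Bornology.IsBounded {z | (y, z) ∈ K} := fun y =>
    (hPk.image (continuous_dotp_left v)).isBounded.subset (slice_subset_image_dotp hu hv P y)
  have hwidth : ConcaveOn ℝ (Icc ymin ymax) fun y => f y + g y :=
    ((concaveOn_sSup_slice hK (convex_Icc _ _) hne fun y _ => (hbdd y).bddAbove).sub
      (convexOn_sInf_slice hK (convex_Icc _ _) hne fun y _ => (hbdd y).bddBelow)).congr
      fun y hy => by simp only [Pi.sub_apply, hf y hy, hg y hy, sub_eq_add_neg]; rfl
  have hwidth₀ : ∀ y ∈ Icc ymin ymax, 0 ≤ f y + g y := fun y hy => by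
    rw [hf y hy, hg y hy, ← sub_eq_add_neg, sub_nonneg]
    exact csInf_le_csSup (hne y hy) (hbdd y).bddBelow (hbdd y).bddAbove
  have hheight : ConcaveOn ℝ (Icc ymin ymax) fun y => y + -ymin :=
    (concaveOn_id (convex_Icc _ _)).add_const (-ymin)
  have hs : ConcaveOn ℝ (Icc ymin ymax) fun y => √(s2 y) :=
    (hheight.sqrt_mul (hwidth.smul (c := 1 / 2) (by norm_num))
      (fun y hy => by simpa [sub_eq_add_neg] using hy.1)
      fun y hy => by simpa using hwidth₀ y hy).congr
      fun y _ => by simp only [smul_eq_mul, hs2]; congr 1; ring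
  have hs2₀ : 0 ≤ s2 y := by
    rw [hs2]; have := hwidth₀ y hy; have := hy.1; positivity
  exact hloc.isMaxOn_of_concaveOn_sqrt hy hs2₀ hs

/-- With `P`, `u`, `v`, `y_min`, `y_max`, `f`, `g` as in the slicing
description, every local maximum of `s² = (1/2)(y - y_min)(f(y)+g(y))` on
`[y_min, y_max]` is a global maximum. -/
theorem stmt_5 (S : Finset Pt) (hSne : (S : Set Pt).Nonempty)
    (P : Set Pt) (hP : P = convexHull ℝ (S : Set Pt)) (hint : (interior P).Nonempty)
    (u : Pt) (hu : u.1 ^ 2 + u.2 ^ 2 = 1)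
    (v : Pt) (hv : v = (-u.2, u.1))
    (ymin ymax : ℝ)
    (hymin : ymin = sInf ((fun x => dotp x u) '' P))
    (hymax : ymax = sSup ((fun x => dotp x u) '' P))
    (f g : ℝ → ℝ)
    (hf : ∀ y ∈ Icc ymin ymax, f y = sSup {z : ℝ | y • u + z • v ∈ P})
    (hg : ∀ y ∈ Icc ymin ymax, g y = -sInf {z : ℝ | y • u + z • v ∈ P})
    (s2 : ℝ → ℝ) (hs2 : ∀ y, s2 y = (y - ymin) * (f y + g y) / 2) :
    ∀ y ∈ Icc ymin ymax, IsLocalMaxOn s2 (Icc ymin ymax) y →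
      ∀ y' ∈ Icc ymin ymax, s2 y' ≤ s2 y :=
  stmt_5_general S hSne P hP u hu v hv ymin ymax hymin hymax f g hf hg s2 hs2
end
end

section
/- Let b'(t_b) = b + t_b·v and c'(t_c) = c + t_c·w where v, w ∈ ℝ² are directions with v ∧ w ≠ 0, and let a ∈ ℝ². The condition that the derivative of the area of triangle a b'(t_b) c'(t_c) along the constrained family (the quantity Q₊₊ = 0) defines an implicit relation between t_b and t_c of the form β t_b − γ t_c + α t_b t_c = 0, where α = v ∧ w, β = v ∧ (c − a/2 − b/2), γ = w ∧ (b − a/2 − c/2), and x ∧ y denotes x₁y₂ − y₁x₂. -/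
/-!
Twice the area of `a b''(h) c''(h)` is a quadratic polynomial in `h`, so the area derivative `Q`
is its linear coefficient. With `u` the unit normal of `bc`, `dotp v u = v ∧ (c - b) / ‖c - b‖`,
so `(dotp v u) (dotp w u) Q` is the polynomial
`N(b, c) = (w ∧ (c - b)) (v ∧ (c - a)) + (v ∧ (c - b)) ((b - a) ∧ w)`, and `Q = 0 ↔ N = 0`.
Sliding `b, c` to `b + t_b v, c + t_c w` changes `N` by exactly `2α (β t_b - γ t_c + α t_b t_c)`,
and `N(b, c) = 0` because `Q` vanishes for the original triangle.
-/

noncomputable section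
open Set Real

/-- Euclidean length in the plane. -/
def elen (p : Pt) : ℝ := Real.sqrt (p.1 ^ 2 + p.2 ^ 2)

/-- The unit normal to the segment from `b` to `c` obtained by rotating `c - b`
by `-90°` (for a counter-clockwise triangle `abc` this points away from `a`). -/
def nhat (b c : Pt) : Pt := (elen (c - b))⁻¹ • ((c.2 - b.2, b.1 - c.1) : Pt)

/-- Twice the signed area of the triangle `a b'(h) c'(h)`, where `b'(h)` and `c'(h)`
are the intersections of the line through `b`, `c` translated by `‖c-b‖·h·u` with the
lines `b + ℝv` and `c + ℝw`. Its derivative at `h = 0` is the area derivative `Q`. -/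
def slideFam (a b c v w u : Pt) : ℝ → ℝ := fun h =>
  wedge ((b + (elen (c - b) * h / dotp v u) • v) - a)
        ((c + (elen (c - b) * h / dotp w u) • w) - a)

lemma wedge_smul_left (r : ℝ) (p q : Pt) : wedge (r • p) q = r * wedge p q := by
  simp only [wedge, Prod.smul_fst, Prod.smul_snd, smul_eq_mul]; ring

lemma wedge_smul_right (r : ℝ) (p q : Pt) : wedge p (r • q) = r * wedge p q := by
  simp only [wedge, Prod.smul_fst, Prod.smul_snd, smul_eq_mul]; ring

lemma hasDerivAt_wedge_lines (p d q e : Pt) :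
    HasDerivAt (fun h : ℝ => wedge (p + h • d) (q + h • e)) (wedge d q + wedge p e) 0 := by
  have hline : ∀ x y : ℝ, HasDerivAt (fun h : ℝ => x + h * y) y 0 := fun x y => by
    simpa using ((hasDerivAt_id (0 : ℝ)).mul_const y).const_add x
  have hcoord := ((hline p.1 d.1).mul (hline q.2 e.2)).sub ((hline p.2 d.2).mul (hline q.1 e.1))
  refine (hcoord.congr_deriv ?_).congr_of_eventuallyEq (.of_forall fun h => ?_)
  · unfold wedge; ring
  · simp only [wedge, Pi.sub_apply, Pi.mul_apply, Prod.fst_add, Prod.snd_add, Prod.smul_fst,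
      Prod.smul_snd, smul_eq_mul]

lemma dotp_nhat (p b c : Pt) :
    dotp p (nhat b c) = (elen (c - b))⁻¹ * wedge p (c - b) := by
  simp only [dotp, nhat, wedge, Prod.smul_fst, Prod.smul_snd, Prod.fst_sub, Prod.snd_sub,
    smul_eq_mul]
  ring

lemma hasDerivAt_slideFam (a b c v w u : Pt) :
    HasDerivAt (slideFam a b c v w u)
      (elen (c - b) / dotp v u * wedge v (c - a) + elen (c - b) / dotp w u * wedge (b - a) w)
      0 := by
  have hlines : slideFam a b c v w u = fun h : ℝ =>
      wedge ((b - a) + h • (elen (c - b) / dotp v u) • v)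
        ((c - a) + h • (elen (c - b) / dotp w u) • w) := by
    funext h
    simp only [slideFam]
    congr 1 <;> module
  rw [hlines, ← wedge_smul_left, ← wedge_smul_right]
  exact hasDerivAt_wedge_lines _ _ _ _

def areaRateNumerator (a b c v w : Pt) : ℝ :=
  wedge w (c - b) * wedge v (c - a) + wedge v (c - b) * wedge (b - a) w

lemma slideFam_nhat_deriv_eq_zero_iff {a b c v w : Pt} {q : ℝ}
    (hv : dotp v (nhat b c) ≠ 0) (hw : dotp w (nhat b c) ≠ 0)
    (hq : HasDerivAt (slideFam a b c v w (nhat b c)) q 0) :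
    q = 0 ↔ areaRateNumerator a b c v w = 0 := by
  have hL : elen (c - b) ≠ 0 := by
    intro hL
    apply hv
    rw [dotp_nhat, hL, inv_zero, zero_mul]
  have hnum : dotp v (nhat b c) * dotp w (nhat b c) * q = areaRateNumerator a b c v w := by
    rw [hq.unique (hasDerivAt_slideFam a b c v w _)]
    field_simp
    rw [dotp_nhat, dotp_nhat]
    field_simp
    unfold areaRateNumerator
    ring
  rw [← hnum, mul_eq_zero, or_iff_right (mul_ne_zero hv hw)]

lemma areaRateNumerator_translate (a b c v w : Pt) (tb tc : ℝ) :
    areaRateNumerator a (b + tb • v) (c + tc • w) v w =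
      areaRateNumerator a b c v w + 2 * wedge v w *
        (wedge v (c - (2:ℝ)⁻¹ • a - (2:ℝ)⁻¹ • b) * tb
          - wedge w (b - (2:ℝ)⁻¹ • a - (2:ℝ)⁻¹ • c) * tc + wedge v w * tb * tc) := by
  simp only [areaRateNumerator, wedge, Prod.fst_sub, Prod.snd_sub, Prod.fst_add, Prod.snd_add,
    Prod.smul_fst, Prod.smul_snd, smul_eq_mul]
  ring

theorem stmt_10_general (a b c v w : Pt) (hα : wedge v w ≠ 0)
    (α β γ : ℝ) (hαdef : α = wedge v w)
    (hβdef : β = wedge v (c - (2:ℝ)⁻¹ • a - (2:ℝ)⁻¹ • b))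
    (hγdef : γ = wedge w (b - (2:ℝ)⁻¹ • a - (2:ℝ)⁻¹ • c))
    (hv0 : dotp v (nhat b c) ≠ 0) (hw0 : dotp w (nhat b c) ≠ 0)
    (hQ0 : HasDerivAt (slideFam a b c v w (nhat b c)) 0 0) :
    ∀ tb tc : ℝ,
      (0 < wedge ((b + tb • v) - a) ((c + tc • w) - a)) →
      b + tb • v ≠ c + tc • w →
      dotp v (nhat (b + tb • v) (c + tc • w)) ≠ 0 →
      dotp w (nhat (b + tb • v) (c + tc • w)) ≠ 0 →
      ∀ q : ℝ,
        HasDerivAt (slideFam a (b + tb • v) (c + tc • w) v w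
          (nhat (b + tb • v) (c + tc • w))) q 0 →
        (q = 0 ↔ β * tb - γ * tc + α * tb * tc = 0) := by
  intro tb tc _ _ hv hw q hq
  have hstationary : areaRateNumerator a b c v w = 0 :=
    (slideFam_nhat_deriv_eq_zero_iff hv0 hw0 hQ0).mp rfl
  subst hαdef hβdef hγdef
  rw [slideFam_nhat_deriv_eq_zero_iff hv hw hq, areaRateNumerator_translate, hstationary,
    zero_add, mul_eq_zero, or_iff_right (mul_ne_zero two_ne_zero hα)]

/-- For `b'(t_b) = b + t_b v`, `c'(t_c) = c + t_c w` with `v ∧ w ≠ 0`,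
the stationarity condition `Q₊₊ = 0` (vanishing of the area derivative along the
constrained family) defines the implicit relation `β t_b - γ t_c + α t_b t_c = 0`,
with `α = v ∧ w`, `β = v ∧ (c - a/2 - b/2)`, `γ = w ∧ (b - a/2 - c/2)`. -/
theorem stmt_10 (a b c v w : Pt) (hα : wedge v w ≠ 0)
    (α β γ : ℝ) (hαdef : α = wedge v w)
    (hβdef : β = wedge v (c - (2:ℝ)⁻¹ • a - (2:ℝ)⁻¹ • b))
    (hγdef : γ = wedge w (b - (2:ℝ)⁻¹ • a - (2:ℝ)⁻¹ • c))
    (hccw0 : 0 < wedge (b - a) (c - a)) (hbc0 : b ≠ c)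
    (hv0 : dotp v (nhat b c) ≠ 0) (hw0 : dotp w (nhat b c) ≠ 0)
    (hQ0 : HasDerivAt (slideFam a b c v w (nhat b c)) 0 0) :
    ∀ tb tc : ℝ,
      (0 < wedge ((b + tb • v) - a) ((c + tc • w) - a)) →
      b + tb • v ≠ c + tc • w →
      dotp v (nhat (b + tb • v) (c + tc • w)) ≠ 0 →
      dotp w (nhat (b + tb • v) (c + tc • w)) ≠ 0 →
      ∀ q : ℝ,
        HasDerivAt (slideFam a (b + tb • v) (c + tc • w) v w
          (nhat (b + tb • v) (c + tc • w))) q 0 →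
        (q = 0 ↔ β * tb - γ * tc + α * tb * tc = 0) :=
  stmt_10_general a b c v w hα α β γ hαdef hβdef hγdef hv0 hw0 hQ0
end
end

section
/- Let abc be a triangle inscribed in a convex polygon P that is candidate-anchored to u (u is the outer normal to side bc and -u is an outer normal to P at a). If Q₊₊(a,b,c) = 0, then abc is anchored to u, i.e., it has maximum area among all inscribed triangles with u as outer normal to the side bc. -/
noncomputable section
open Set Real

/-- `v` is a forward (counter-clockwise) tangent direction of `∂P` at the boundary
point `x`: the boundary contains a segment from `x` in direction `v`, and `P` lies to
the left of the directed line through `x` with direction `v`. -/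
def FwdTangent (P : Set Pt) (x v : Pt) : Prop :=
  (∃ ε > (0:ℝ), ∀ t ∈ Icc (0:ℝ) ε, x + t • v ∈ frontier P) ∧
    ∀ y ∈ P, 0 ≤ wedge v (y - x)

/-- `v` is a backward (clockwise) tangent direction of `∂P` at the boundary point `x`:
the boundary contains a segment arriving at `x` in direction `v`, and `P` lies to the
left of the directed line through `x` with direction `v`. -/
def BwdTangent (P : Set Pt) (x v : Pt) : Prop :=
  (∃ ε > (0:ℝ), ∀ t ∈ Icc (0:ℝ) ε, x - t • v ∈ frontier P) ∧
    ∀ y ∈ P, 0 ≤ wedge v (y - x)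

lemma quadDeriv (c0 c1 c2 : ℝ) : HasDerivAt (fun h : ℝ => c0 + (c1 * h + c2 * (h * h))) c1 0 := by
  have hx : HasDerivAt (fun h : ℝ => h) 1 (0:ℝ) := hasDerivAt_id 0
  have h2 := (hx.const_mul c1).add ((hx.mul hx).const_mul c2)
  simpa using h2.const_add c0

lemma mainCalc (al be gv gw h0 Xb Xc sa sb Xb' Xc' : ℝ)
    (hF6 : al * be * (Xc - Xb) + h0 * (al * gw - be * gv) = 0)
    (hvpos : 0 < al) (hwneg : be < 0) (h0pos : 0 < h0) (ht0pos : 0 < Xc - Xb)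
    (sa0 : 0 ≤ sa) (sb0 : 0 ≤ sb) (hh : sa ≤ sb)
    (hib : 0 ≤ al * (Xb' - Xb) - (sb - h0) * gv)
    (hic : 0 ≤ be * (Xc' - Xc) - (sb - h0) * gw) :
    (sb - sa) * (Xc' - Xb') ≤ h0 * (Xc - Xb) := by
  have e1 : 0 ≤ (-be) * (al * (Xb' - Xb) - (sb - h0) * gv) := mul_nonneg (by linarith) hib
  have e2 : 0 ≤ al * (be * (Xc' - Xc) - (sb - h0) * gw) := mul_nonneg hvpos.le hic
  have hsum : 0 ≤ al * be * ((Xc' - Xb') - (Xc - Xb)) - (sb - h0) * (al * gw - be * gv) := by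
    nlinarith [e1, e2]
  have h7 : 0 ≤ h0 * (al * be * ((Xc' - Xb') - (Xc - Xb)) - (sb - h0) * (al * gw - be * gv)) :=
    mul_nonneg h0pos.le hsum
  have h8 : (sb - h0) * (h0 * (al * gw - be * gv)) = (sb - h0) * (-(al * be * (Xc - Xb))) := by
    have h : h0 * (al * gw - be * gv) = -(al * be * (Xc - Xb)) := by linarith
    rw [h]
  have h9 : 0 ≤ al * be * (h0 * (Xc' - Xb') - (Xc - Xb) * (2 * h0 - sb)) := by
    nlinarith [h7, h8]
  have hneg : al * be < 0 := mul_neg_of_pos_of_neg hvpos hwneg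
  have h10 : h0 * (Xc' - Xb') ≤ (Xc - Xb) * (2 * h0 - sb) := by
    by_contra hn
    push_neg at hn
    nlinarith [h9, hneg, hn]
  rcases le_or_gt (Xc' - Xb') 0 with ht' | ht'
  · have hle : (sb - sa) * (Xc' - Xb') ≤ 0 := mul_nonpos_of_nonneg_of_nonpos (by linarith) ht'
    nlinarith
  · have q1 : (sb - sa) * (Xc' - Xb') ≤ sb * (Xc' - Xb') :=
      mul_le_mul_of_nonneg_right (by linarith) ht'.le
    have q2 : sb * (h0 * (Xc' - Xb')) ≤ sb * ((Xc - Xb) * (2 * h0 - sb)) :=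
      mul_le_mul_of_nonneg_left h10 sb0
    have q3 : sb * ((Xc - Xb) * (2 * h0 - sb)) ≤ (Xc - Xb) * (h0 * h0) := by
      nlinarith [sq_nonneg (h0 - sb), ht0pos]
    have q4 : h0 * ((sb - sa) * (Xc' - Xb')) ≤ h0 * (h0 * (Xc - Xb)) := by
      nlinarith [mul_le_mul_of_nonneg_left q1 h0pos.le, q2, q3]
    exact le_of_mul_le_mul_left q4 h0pos


/-- If `abc`, inscribed in the convex polygon `P`, is candidate-anchored
to `u` (`u` outer normal to side `bc`, `-u` outer normal to `P` at `a`) and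
`Q₊₊(a,b,c) = 0` (the area derivative along the family determined by the forward
tangent directions `v` at `b` and `w` at `c` vanishes), then `abc` is anchored to `u`. -/
theorem stmt_14 (S : Finset Pt) (hS : ¬ Collinear ℝ (S : Set Pt))
    (P : Set Pt) (hP : P = convexHull ℝ (S : Set Pt))
    (u : Pt) (hu : u.1 ^ 2 + u.2 ^ 2 = 1)
    (a b c : Pt) (ha : a ∈ P) (hbP : b ∈ P) (hcP : c ∈ P)
    (hccw : 0 ≤ wedge (b - a) (c - a)) (hbcu : dotp (c - b) u = 0)
    (hamin : ∀ x ∈ P, dotp a u ≤ dotp x u)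
    (v w : Pt) (hv : FwdTangent P b v) (hw : FwdTangent P c w)
    (hvu : dotp v u ≠ 0) (hwu : dotp w u ≠ 0) (hbc : b ≠ c)
    (hQpp : HasDerivAt (slideFam a b c v w u) 0 0) :
    Anchored P u a b c := by
  obtain ⟨-, hvP⟩ := hv
  obtain ⟨-, hwP⟩ := hw
  -- basic algebraic identities
  have key : ∀ p q : Pt, wedge p q = dotp p u * wedge u q - dotp q u * wedge u p := by
    intro p q
    simp only [wedge, dotp]
    linear_combination (p.2 * q.1 - p.1 * q.2) * hu
  have dsub2 : ∀ p q : Pt, dotp (p - q) u = dotp p u - dotp q u := by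
    intro p q; simp only [dotp, Prod.fst_sub, Prod.snd_sub]; ring
  have dsub : ∀ p q : Pt, dotp (p - q) u = dotp (p - a) u - dotp (q - a) u := by
    intro p q; simp only [dotp, Prod.fst_sub, Prod.snd_sub]; ring
  have wsub : ∀ p q : Pt, wedge u (p - q) = wedge u (p - a) - wedge u (q - a) := by
    intro p q; simp only [wedge, Prod.fst_sub, Prod.snd_sub]; ring
  have master : ∀ p q r : Pt, wedge (q - p) (r - p) =
      (dotp (q - a) u - dotp (p - a) u) * (wedge u (r - a) - wedge u (p - a)) -
      (dotp (r - a) u - dotp (p - a) u) * (wedge u (q - a) - wedge u (p - a)) := by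
    intro p q r
    rw [key (q - p) (r - p), dsub q p, dsub r p, wsub q p, wsub r p]
  have veczero : ∀ p : Pt, dotp p u = 0 → wedge u p = 0 → p = 0 := by
    intro p h1 h2
    simp only [dotp, wedge] at h1 h2
    have e1 : p.1 = 0 := by linear_combination u.1 * h1 - u.2 * h2 - p.1 * hu
    have e2 : p.2 = 0 := by linear_combination u.2 * h1 + u.1 * h2 - p.2 * hu
    exact Prod.ext e1 e2
  -- positivity of the base length
  have hcbne : c - b ≠ (0:Pt) := sub_ne_zero_of_ne (Ne.symm hbc)
  have hLpos : 0 < elen (c - b) := by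
    have h2 : 0 < (c - b).1 ^ 2 + (c - b).2 ^ 2 := by
      rcases (lt_or_eq_of_le (by positivity : (0:ℝ) ≤ (c - b).1 ^ 2 + (c - b).2 ^ 2)) with h | h
      · exact h
      · exfalso
        apply hcbne
        have e1 : (c - b).1 = 0 := by nlinarith [sq_nonneg (c - b).1, sq_nonneg (c - b).2]
        have e2 : (c - b).2 = 0 := by nlinarith [sq_nonneg (c - b).1, sq_nonneg (c - b).2]
        exact Prod.ext e1 e2
    simpa [elen] using Real.sqrt_pos.mpr h2
  -- the derivative of the sliding family
  have hderiv : HasDerivAt (slideFam a b c v w u)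
      (elen (c - b) / dotp v u * wedge v (c - a) + elen (c - b) / dotp w u * wedge (b - a) w) 0 := by
    have heq : slideFam a b c v w u = fun h : ℝ =>
        wedge (b - a) (c - a) +
        ((elen (c - b) / dotp v u * wedge v (c - a) + elen (c - b) / dotp w u * wedge (b - a) w) * h +
         (elen (c - b) / dotp v u * (elen (c - b) / dotp w u) * wedge v w) * (h * h)) := by
      funext h
      simp only [slideFam, wedge, Prod.fst_add, Prod.snd_add, Prod.fst_sub, Prod.snd_sub,
        Prod.smul_fst, Prod.smul_snd, smul_eq_mul]
      ring
    rw [heq]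
    exact quadDeriv _ _ _
  have hQ0 : (0:ℝ) = elen (c - b) / dotp v u * wedge v (c - a) +
      elen (c - b) / dotp w u * wedge (b - a) w := hQpp.unique hderiv
  have hQ2 : dotp w u * wedge v (c - a) + dotp v u * wedge (b - a) w = 0 := by
    have hL' : elen (c - b) ≠ 0 := ne_of_gt hLpos
    field_simp at hQ0
    have h2 : elen (c - b) * (dotp w u * wedge v (c - a) + dotp v u * wedge (b - a) w)
        = elen (c - b) * 0 := by linarith [hQ0]
    exact mul_left_cancel₀ hL' h2
  -- scalar bookkeeping
  have hcb0 : dotp (c - a) u = dotp (b - a) u := by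
    have h := hbcu
    rw [dsub c b] at h
    linarith
  have hF6 : dotp v u * dotp w u * (wedge u (c - a) - wedge u (b - a)) +
      dotp (b - a) u * (dotp v u * wedge u w - dotp w u * wedge u v) = 0 := by
    rw [key v (c - a), key (b - a) w, hcb0] at hQ2
    linear_combination hQ2
  have ht0ne : wedge u (c - a) - wedge u (b - a) ≠ 0 := by
    intro h
    apply hbc
    have h1 : wedge u (c - b) = 0 := by rw [wsub c b]; linarith
    have h2 := veczero (c - b) hbcu h1
    exact (sub_eq_zero.mp h2).symm
  have h0nonneg : 0 ≤ dotp (b - a) u := by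
    rw [dsub2 b a]; linarith [hamin b hbP]
  have hW0 : wedge (b - a) (c - a) = dotp (b - a) u * (wedge u (c - a) - wedge u (b - a)) := by
    have z1 : dotp (a - a) u = 0 := by simp [dotp]
    have z2 : wedge u (a - a) = 0 := by simp [wedge]
    rw [master a b c, hcb0, z1, z2]; ring
  have h0pos : 0 < dotp (b - a) u := by
    rcases eq_or_lt_of_le h0nonneg with h | h
    · exfalso
      have h5 : dotp (b - a) u * (dotp v u * wedge u w - dotp w u * wedge u v) = 0 := by
        rw [← h]; ring
      have h4 : dotp v u * dotp w u * (wedge u (c - a) - wedge u (b - a)) = 0 := by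
        linarith [hF6, h5]
      exact ht0ne ((mul_eq_zero.mp h4).resolve_left (mul_ne_zero hvu hwu))
    · exact h
  have ht0pos : 0 < wedge u (c - a) - wedge u (b - a) := by
    have h6 : 0 ≤ dotp (b - a) u * (wedge u (c - a) - wedge u (b - a)) := by
      rw [← hW0]; exact hccw
    rcases lt_trichotomy (wedge u (c - a) - wedge u (b - a)) 0 with hlt | heq0 | hgt
    · exfalso; nlinarith [h6]
    · exact absurd heq0 ht0ne
    · exact hgt
  have hvpos : 0 < dotp v u := by
    have h := hvP c hcP
    rw [key v (c - b), wsub c b, hbcu] at h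
    rcases lt_trichotomy (dotp v u) 0 with hlt | h0' | hgt
    · exfalso; nlinarith [h, ht0pos]
    · exact absurd h0' hvu
    · exact hgt
  have hwneg : dotp w u < 0 := by
    have h := hwP b hbP
    have hbc0 : dotp (b - c) u = 0 := by rw [dsub b c]; linarith [hcb0]
    rw [key w (b - c), wsub b c, hbc0] at h
    rcases lt_trichotomy (dotp w u) 0 with hlt | h0' | hgt
    · exact hlt
    · exact absurd h0' hwu
    · exfalso; nlinarith [h, ht0pos]
  -- assemble
  refine ⟨⟨ha, hbP, hcP, hccw, hbcu, hamin b hbP⟩, ?_⟩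
  rintro a' b' c' ⟨ha', hb', hc', hccw', hbcu', hab'⟩
  have sa'0 : 0 ≤ dotp (a' - a) u := by rw [dsub2 a' a]; linarith [hamin a' ha']
  have sb'0 : 0 ≤ dotp (b' - a) u := by rw [dsub2 b' a]; linarith [hamin b' hb']
  have hh' : dotp (a' - a) u ≤ dotp (b' - a) u := by
    rw [dsub2 a' a, dsub2 b' a]; linarith [hab']
  have hsc' : dotp (c' - a) u = dotp (b' - a) u := by
    have h := hbcu'
    rw [dsub c' b'] at h
    linarith
  have hA' : wedge (b' - a') (c' - a') =
      (dotp (b' - a) u - dotp (a' - a) u) * (wedge u (c' - a) - wedge u (b' - a)) := by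
    rw [master a' b' c', hsc']; ring
  have hib : 0 ≤ dotp v u * (wedge u (b' - a) - wedge u (b - a)) -
      (dotp (b' - a) u - dotp (b - a) u) * wedge u v := by
    have h := hvP b' hb'
    rw [key v (b' - b), wsub b' b, dsub b' b] at h
    exact h
  have hic : 0 ≤ dotp w u * (wedge u (c' - a) - wedge u (c - a)) -
      (dotp (b' - a) u - dotp (b - a) u) * wedge u w := by
    have h := hwP c' hc'
    rw [key w (c' - c), wsub c' c, dsub c' c, hsc', hcb0] at h
    exact h
  have main : wedge (b' - a') (c' - a') ≤ wedge (b - a) (c - a) := by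
    rw [hA', hW0]
    exact mainCalc (dotp v u) (dotp w u) (wedge u v) (wedge u w) (dotp (b - a) u)
      (wedge u (b - a)) (wedge u (c - a)) (dotp (a' - a) u) (dotp (b' - a) u)
      (wedge u (b' - a)) (wedge u (c' - a)) hF6 hvpos hwneg h0pos ht0pos sa'0 sb'0 hh' hib hic
  simp only [triArea]
  rw [abs_of_nonneg hccw', abs_of_nonneg hccw]
  linarith [main]
end
end

section
/- For points a, b, c ∈ ℝ² and direction vectors v, w ∈ ℝ², the quantity Q(a,b,c) = (c₂−b₂)[(b₂−c₂)v₁w₁ − (a₁−c₁)v₂w₁ + (a₁−b₁)v₁w₂] + (c₁−b₁)[(b₁−c₁)v₂w₂ − (a₂−c₂)v₁w₂ + (a₂−b₂)v₂w₁] equals (up to the positive factor ‖c−b‖ and normalization) the derivative at h = 0 of twice the area of the triangle a b'(h) c'(h), where b'(h) and c'(h) are the intersections of the line through b and c translated by ‖c−b‖·h·u (u the unit normal to c−b pointing away from a) with the lines b + ℝv and c + ℝw, assuming v·u ≠ 0 and w·u ≠ 0. -/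
noncomputable section
open Set Real

/-- The closed-form `calculate_Q` of the paper. -/
def Qf (a b c v w : Pt) : ℝ :=
  (c.2 - b.2) * ((b.2 - c.2) * v.1 * w.1 - (a.1 - c.1) * v.2 * w.1 + (a.1 - b.1) * v.1 * w.2)
  + (c.1 - b.1) * ((b.1 - c.1) * v.2 * w.2 - (a.2 - c.2) * v.1 * w.2 + (a.2 - b.2) * v.2 * w.1)

/-! The unit normal `u` is forced to be `nhat b c`: orthogonality to `c - b` makes it
`± rot (c - b) / ‖c - b‖`, and `u · (a - b) < 0` together with the orientation of `abc`
fixes the sign. With `α = ‖c - b‖ / (v · u)` and `β = ‖c - b‖ / (w · u)` the family is then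
`h ↦ (b - a + α h v) ∧ (c - a + β h w)`, a quadratic in `h` with derivative
`α (v ∧ (c - a)) + β ((b - a) ∧ w)` at `0`. Writing `v · u` and `w · u` through `rot (c - b)`
turns this into `-Qf / ((v · u) (w · u))` by a polynomial identity. -/

def rot (p : Pt) : Pt := (p.2, -p.1)

lemma dotp_rot (p q : Pt) : dotp (rot p) q = wedge q p := by
  simp only [dotp, rot, wedge]; ring

lemma elen_sq (p : Pt) : elen p ^ 2 = dotp p p := by
  rw [elen, Real.sq_sqrt (by positivity)]; simp only [dotp]; ring

lemma elen_pos {p : Pt} (hp : p ≠ 0) : 0 < elen p := by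
  refine Real.sqrt_pos.2 ?_
  rcases p with ⟨x, y⟩
  have : x ≠ 0 ∨ y ≠ 0 := by
    by_contra! h
    exact hp (Prod.ext h.1 h.2)
  rcases this with h | h <;> positivity

lemma nhat_eq_smul_rot (b c : Pt) : nhat b c = (elen (c - b))⁻¹ • rot (c - b) := by
  simp only [nhat, rot, Prod.fst_sub, Prod.snd_sub, neg_sub]

section Perp

variable {u d : Pt}

lemma dotp_rot_smul_rot_of_dotp_eq_zero (h : dotp u d = 0) :
    dotp u (rot d) • rot d = dotp d d • u := by
  simp only [dotp, rot] at h ⊢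
  ext <;> simp only [Prod.smul_fst, Prod.smul_snd, smul_eq_mul]
  · linear_combination -d.1 * h
  · linear_combination -d.2 * h

lemma dotp_rot_sq_of_dotp_eq_zero (h : dotp u d = 0) :
    dotp u (rot d) ^ 2 = dotp u u * dotp d d := by
  simp only [dotp, rot] at h ⊢
  linear_combination -h * (u.1 * d.1 + u.2 * d.2)

end Perp

lemma eq_nhat_of_unit_normal {a b c u : Pt}
    (hccw : 0 < wedge (b - a) (c - a)) (hbc : b ≠ c)
    (hu1 : u.1 ^ 2 + u.2 ^ 2 = 1) (huperp : dotp u (c - b) = 0)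
    (huaway : dotp u (a - b) < 0) :
    u = nhat b c := by
  set d := c - b
  set L := elen d
  set s := dotp u (rot d)
  have hL : 0 < L := elen_pos (sub_ne_zero.2 hbc.symm)
  have hLsq : L ^ 2 = dotp d d := elen_sq d
  have hpar : s • rot d = dotp d d • u := dotp_rot_smul_rot_of_dotp_eq_zero huperp
  have hs_sq : s ^ 2 = L ^ 2 := by
    rw [dotp_rot_sq_of_dotp_eq_zero huperp, hLsq]
    simp only [dotp, hu1, ← sq]; ring
  have hrot_away : dotp (rot d) (a - b) = -wedge (b - a) (c - a) := by
    simp only [dotp_rot, wedge, d, Prod.fst_sub, Prod.snd_sub]; ring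
  have hs_pos : 0 < s := by
    have key : s * dotp (rot d) (a - b) = L ^ 2 * dotp u (a - b) := by
      have := congrArg (dotp · (a - b)) hpar
      simp only [dotp, Prod.smul_fst, Prod.smul_snd, smul_eq_mul] at this ⊢
      rw [hLsq]; simp only [dotp]; linear_combination this
    rw [hrot_away] at key
    nlinarith [mul_neg_of_pos_of_neg (pow_pos hL 2) huaway]
  have hs : s = L := (sq_eq_sq₀ hs_pos.le hL.le).1 hs_sq
  rw [hs, ← hLsq] at hpar
  rw [nhat_eq_smul_rot, eq_inv_smul_iff₀ hL.ne']
  apply smul_right_injective Pt hL.ne'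
  simpa only [smul_smul, sq] using hpar.symm

lemma wedge_add_smul_add_smul (p q v w : Pt) (s t : ℝ) :
    wedge (p + s • v) (q + t • w) =
      wedge p q + s * wedge v q + t * wedge p w + s * t * wedge v w := by
  simp only [wedge, Prod.fst_add, Prod.snd_add, Prod.smul_fst, Prod.smul_snd, smul_eq_mul]; ring

lemma hasDerivAt_wedge_add_smul (p q v w : Pt) (α β : ℝ) :
    HasDerivAt (fun h : ℝ => wedge (p + (α * h) • v) (q + (β * h) • w))
      (α * wedge v q + β * wedge p w) 0 := by
  simp_rw [wedge_add_smul_add_smul]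
  have hα : HasDerivAt (fun h : ℝ => α * h) α 0 := by
    simpa using (hasDerivAt_id (0 : ℝ)).const_mul α
  have hβ : HasDerivAt (fun h : ℝ => β * h) β 0 := by
    simpa using (hasDerivAt_id (0 : ℝ)).const_mul β
  simpa using (((hα.mul_const (wedge v q)).const_add (wedge p q)).fun_add
    (hβ.mul_const (wedge p w))).fun_add ((hα.fun_mul hβ).mul_const (wedge v w))

lemma slideFam_eq (a b c v w u : Pt) :
    slideFam a b c v w u = fun h : ℝ =>
      wedge ((b - a) + (elen (c - b) / dotp v u * h) • v)
        ((c - a) + (elen (c - b) / dotp w u * h) • w) := by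
  funext h
  simp only [slideFam, mul_div_right_comm]
  congr 1 <;> abel

lemma Qf_eq (a b c v w : Pt) :
    Qf a b c v w =
      -(dotp v (rot (c - b)) * wedge (b - a) w + dotp w (rot (c - b)) * wedge v (c - a)) := by
  simp only [Qf, dotp, rot, wedge, Prod.fst_sub, Prod.snd_sub]; ring

/-- the closed-form `Qf` equals, up to the positive factor
`-1/((v·u)(w·u))` (positive in the geometric configuration where `v·u > 0 > w·u`),
the derivative at `h = 0` of twice the area of `a b'(h) c'(h)`, where `u` is the unit
normal to `c - b` pointing away from `a`, assuming `v·u ≠ 0` and `w·u ≠ 0`. -/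
theorem stmt_19 (a b c v w u : Pt)
    (hccw : 0 < wedge (b - a) (c - a)) (hbc : b ≠ c)
    (hu1 : u.1 ^ 2 + u.2 ^ 2 = 1) (huperp : dotp u (c - b) = 0)
    (huaway : dotp u (a - b) < 0)
    (hv : dotp v u ≠ 0) (hw : dotp w u ≠ 0) :
    HasDerivAt (slideFam a b c v w u) (-(Qf a b c v w) / (dotp v u * dotp w u)) 0 := by
  have hL : elen (c - b) ≠ 0 := (elen_pos (sub_ne_zero.2 hbc.symm)).ne'
  have hdotp_u (x : Pt) : dotp x u = dotp x (rot (c - b)) / elen (c - b) := by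
    rw [eq_nhat_of_unit_normal hccw hbc hu1 huperp huaway, nhat_eq_smul_rot]
    simp only [dotp, Prod.smul_fst, Prod.smul_snd, smul_eq_mul]; field_simp
  rw [slideFam_eq]
  convert hasDerivAt_wedge_add_smul _ _ _ _ _ _ using 1
  rw [hdotp_u, div_ne_zero_iff] at hv hw
  rw [Qf_eq, hdotp_u, hdotp_u]
  field_simp [hv.1, hw.1]
  ring
end
end
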